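/- arXiv:2011.03978 — 7 statements merged into one kernel-verified Lean document; each statement's English description precedes it below -/
import Mathlib

section
/- Let A be a set, n ≥ 1, and let ~ be an equivalence relation on a subset S of A^n. Let G be a permutation group acting on A that is n-"primitive" and leaves the ~-classes invariant. Then any approximation η of ~ (invariant under G) which is presmooth with respect to G is also smooth with respect to G. -/
namespace Paper

/-! ### Tuples, permutations, orbits -/

/-- Componentwise application of a `k`-ary operation to `k` many `n`-tuples. -/
def appN {A : Type*} {k n : ℕ} (f : (Fin k → A) → A) (xs : Fin k → Fin n → A) : Fin n → A :=
  fun j => f fun i => xs i j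

/-- Two tuples are disjoint if they share no entries. -/
def DisjTup {A : Type*} {n : ℕ} (a b : Fin n → A) : Prop := ∀ i j, a i ≠ b j

/-- Componentwise action of a permutation on a tuple. -/
def permTup {A : Type*} {n : ℕ} (g : Equiv.Perm A) (a : Fin n → A) : Fin n → A := fun i => g (a i)

/-- Orbit equivalence of tuples under a set of permutations. -/
def OrbEq {A : Type*} (G : Set (Equiv.Perm A)) {n : ℕ} (a b : Fin n → A) : Prop :=
  ∃ g ∈ G, permTup g a = b

/-- `r` is an equivalence relation with support `S`. -/
structure EqvOn {X : Type*} (S : Set X) (r : X → X → Prop) : Prop where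
  refl : ∀ a ∈ S, r a a
  symm : ∀ {a b}, r a b → r b a
  trans : ∀ {a b c}, r a b → r b c → r a c
  dom : ∀ {a b}, r a b → a ∈ S ∧ b ∈ S

/-! ### Function clones -/

/-- A function clone, given as a family of sets of finitary operations:
it contains all projections and is closed under composition. -/
def IsClone {A : Type*} (C : ∀ k : ℕ, Set ((Fin k → A) → A)) : Prop :=
  (∀ (k : ℕ) (i : Fin k), (fun x => x i) ∈ C k) ∧
  (∀ (k m : ℕ) (f : (Fin k → A) → A) (g : Fin k → (Fin m → A) → A),
    f ∈ C k → (∀ i, g i ∈ C m) → (fun x => f fun i => g i x) ∈ C m)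

/-- Membership of a unary function in a clone. -/
def UnaryMem {A : Type*} (C : ∀ k : ℕ, Set ((Fin k → A) → A)) (u : A → A) : Prop :=
  (fun x : Fin 1 → A => u (x 0)) ∈ C 1

/-- The permutations invertibly contained in a clone. -/
def GrpOf {A : Type*} (C : ∀ k : ℕ, Set ((Fin k → A) → A)) : Set (Equiv.Perm A) :=
  {σ : Equiv.Perm A | UnaryMem C ⇑σ ∧ UnaryMem C ⇑σ.symm}

/-- A set of permutations is oligomorphic: finitely many orbits on `m`-tuples for all `m`. -/
def Oligo {A : Type*} (G : Set (Equiv.Perm A)) : Prop :=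
  ∀ m : ℕ, ∃ l : List (Fin m → A), ∀ a : Fin m → A, ∃ b ∈ l, OrbEq G b a

/-- The clone is topologically closed (w.r.t. pointwise convergence). -/
def CloneClosed {A : Type*} (C : ∀ k : ℕ, Set ((Fin k → A) → A)) : Prop :=
  ∀ (k : ℕ) (f : (Fin k → A) → A),
    (∀ F : Finset (Fin k → A), ∃ g ∈ C k, ∀ x ∈ F, f x = g x) → f ∈ C k

/-- Model-complete core: the unary part coincides with the closure of the invertibles. -/
def MCCoreClone {A : Type*} (C : ∀ k : ℕ, Set ((Fin k → A) → A)) : Prop :=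
  ∀ u : A → A, UnaryMem C u ↔ ∀ F : Finset A, ∃ σ ∈ GrpOf C, ∀ x ∈ F, u x = σ x

/-- Invariance of a set of `n`-tuples under the componentwise action of a clone. -/
def SetInvN {A : Type*} (C : ∀ k : ℕ, Set ((Fin k → A) → A)) {n : ℕ}
    (S : Set (Fin n → A)) : Prop :=
  ∀ (k : ℕ) (f : (Fin k → A) → A), f ∈ C k →
    ∀ xs : Fin k → Fin n → A, (∀ i, xs i ∈ S) → appN f xs ∈ S

/-- Invariance of a binary relation on `n`-tuples under a clone. -/
def RelInvN {A : Type*} (C : ∀ k : ℕ, Set ((Fin k → A) → A)) {n : ℕ}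
    (r : (Fin n → A) → (Fin n → A) → Prop) : Prop :=
  ∀ (k : ℕ) (f : (Fin k → A) → A), f ∈ C k → ∀ xs ys : Fin k → Fin n → A,
    (∀ i, r (xs i) (ys i)) → r (appN f xs) (appN f ys)

/-- Equational triviality: existence of a clone homomorphism to the clone of projections. -/
def EquaTrivial {A : Type*} (C : ∀ k : ℕ, Set ((Fin k → A) → A)) : Prop :=
  ∃ idx : ∀ k : ℕ, ((Fin k → A) → A) → Fin k,
    (∀ (k : ℕ) (i : Fin k), idx k (fun x => x i) = i) ∧
    (∀ (k m : ℕ) (f : (Fin k → A) → A) (g : Fin k → (Fin m → A) → A),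
      f ∈ C k → (∀ i, g i ∈ C m) →
      idx m (fun x => f fun i => g i x) = idx m (g (idx k f)))

/-- A clone is `n`-canonical w.r.t. `G`: it preserves `G`-orbit-equivalence of `n`-tuples. -/
def NCanonical {A : Type*} (G : Set (Equiv.Perm A)) (n : ℕ)
    (C : ∀ k : ℕ, Set ((Fin k → A) → A)) : Prop :=
  ∀ (k : ℕ) (f : (Fin k → A) → A), f ∈ C k → ∀ xs ys : Fin k → Fin n → A,
    (∀ i, OrbEq G (xs i) (ys i)) → OrbEq G (appN f xs) (appN f ys)

/-! ### Smooth approximations -/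

/-- `G` leaves the `r`-classes invariant. -/
def ClassesInv {A : Type*} (G : Set (Equiv.Perm A)) {n : ℕ} (S : Set (Fin n → A))
    (r : (Fin n → A) → (Fin n → A) → Prop) : Prop :=
  ∀ g ∈ G, ∀ a ∈ S, r (permTup g a) a

/-- `G` leaves the relation `η` invariant. -/
def GRelInv {A : Type*} (G : Set (Equiv.Perm A)) {n : ℕ}
    (η : (Fin n → A) → (Fin n → A) → Prop) : Prop :=
  ∀ g ∈ G, ∀ a b, η a b → η (permTup g a) (permTup g b)

/-- `η` (an equivalence relation on `S' ⊇ S`) approximates `r`: its restriction to `S`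
refines `r`. -/
def ApproxOf {A : Type*} {n : ℕ} (S S' : Set (Fin n → A))
    (r η : (Fin n → A) → (Fin n → A) → Prop) : Prop :=
  S ⊆ S' ∧ EqvOn S' η ∧ ∀ a b, a ∈ S → b ∈ S → η a b → r a b

/-- Presmooth approximation: each `r`-class meets some `η`-class in a set containing two
disjoint tuples in the same `G`-orbit. -/
def Presmooth {A : Type*} (G : Set (Equiv.Perm A)) {n : ℕ} (S : Set (Fin n → A))
    (r η : (Fin n → A) → (Fin n → A) → Prop) : Prop :=
  ∀ a ∈ S, ∃ b c, b ∈ S ∧ c ∈ S ∧ r a b ∧ r a c ∧ η b c ∧ OrbEq G b c ∧ DisjTup b c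

/-- Smooth approximation: each `r`-class meets some `η`-class in a set containing
a full `G`-orbit. -/
def Smooth {A : Type*} (G : Set (Equiv.Perm A)) {n : ℕ} (S : Set (Fin n → A))
    (r η : (Fin n → A) → (Fin n → A) → Prop) : Prop :=
  ∀ a ∈ S, ∃ b, b ∈ S ∧ r a b ∧ ∀ c, OrbEq G b c → c ∈ S ∧ r a c ∧ η b c

/-- Very smooth approximation: `G`-orbit-equivalence refines `η` on `S`. -/
def VerySmooth {A : Type*} (G : Set (Equiv.Perm A)) {n : ℕ} (S : Set (Fin n → A))
    (η : (Fin n → A) → (Fin n → A) → Prop) : Prop :=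
  ∀ a b, a ∈ S → b ∈ S → OrbEq G a b → η a b

/-- `G` is `n`-"primitive": on each orbit of `n`-tuples, any `G`-invariant equivalence
relation relating two disjoint tuples is full. -/
def PrimitiveN {A : Type*} (G : Set (Equiv.Perm A)) (n : ℕ) : Prop :=
  ∀ (a₀ : Fin n → A) (r : (Fin n → A) → (Fin n → A) → Prop),
    EqvOn {b | OrbEq G a₀ b} r → GRelInv G r →
    (∃ a b, r a b ∧ DisjTup a b) →
    ∀ a b, OrbEq G a₀ a → OrbEq G a₀ b → r a b

/-! ### Relational structures -/

/-- A relational structure on `M` with signature `(ι, ar)`. -/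
abbrev Struct (M : Type*) (ι : Type) (ar : ι → ℕ) := ∀ i : ι, (Fin (ar i) → M) → Prop

/-- First-order definable relations over `B` (without parameters). -/
inductive FODef {M : Type*} {ι : Type} {ar : ι → ℕ} (B : Struct M ι ar) :
    ∀ {k : ℕ}, ((Fin k → M) → Prop) → Prop
  | basic (i : ι) : FODef B (B i)
  | eq : FODef B (fun x : Fin 2 → M => x 0 = x 1)
  | reindex {m k : ℕ} (σ : Fin m → Fin k) {R : (Fin m → M) → Prop} :
      FODef B R → FODef B (fun x : Fin k → M => R (x ∘ σ))
  | inter {k : ℕ} {R R' : (Fin k → M) → Prop} :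
      FODef B R → FODef B R' → FODef B (fun x => R x ∧ R' x)
  | compl {k : ℕ} {R : (Fin k → M) → Prop} : FODef B R → FODef B (fun x => ¬ R x)
  | ex {k : ℕ} {R : (Fin (k + 1) → M) → Prop} :
      FODef B R → FODef B (fun x : Fin k → M => ∃ a, R (Fin.snoc x a))

/-- Primitive positive definable relations over `B`. -/
inductive PPDef {M : Type*} {ι : Type} {ar : ι → ℕ} (B : Struct M ι ar) :
    ∀ {k : ℕ}, ((Fin k → M) → Prop) → Prop
  | basic (i : ι) : PPDef B (B i)
  | eq : PPDef B (fun x : Fin 2 → M => x 0 = x 1)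
  | reindex {m k : ℕ} (σ : Fin m → Fin k) {R : (Fin m → M) → Prop} :
      PPDef B R → PPDef B (fun x : Fin k → M => R (x ∘ σ))
  | inter {k : ℕ} {R R' : (Fin k → M) → Prop} :
      PPDef B R → PPDef B R' → PPDef B (fun x => R x ∧ R' x)
  | ex {k : ℕ} {R : (Fin (k + 1) → M) → Prop} :
      PPDef B R → PPDef B (fun x : Fin k → M => ∃ a, R (Fin.snoc x a))

def IsAut {M : Type*} {ι : Type} {ar : ι → ℕ} (B : Struct M ι ar) (g : Equiv.Perm M) : Prop :=
  ∀ (i : ι) (x : Fin (ar i) → M), B i x ↔ B i fun t => g (x t)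

def AutSet {M : Type*} {ι : Type} {ar : ι → ℕ} (B : Struct M ι ar) : Set (Equiv.Perm M) :=
  {g | IsAut B g}

/-- Homogeneity: every partial isomorphism between finite substructures extends to
an automorphism. -/
def Homogeneous {M : Type*} {ι : Type} {ar : ι → ℕ} (B : Struct M ι ar) : Prop :=
  ∀ (s : Finset M) (f : M → M),
    (∀ x ∈ s, ∀ y ∈ s, f x = f y → x = y) →
    (∀ (i : ι) (x : Fin (ar i) → M), (∀ t, x t ∈ s) → (B i x ↔ B i fun t => f (x t))) →
    ∃ g : Equiv.Perm M, IsAut B g ∧ ∀ x ∈ s, g x = f x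

def TransitiveStruct {M : Type*} {ι : Type} {ar : ι → ℕ} (B : Struct M ι ar) : Prop :=
  ∀ a b : M, ∃ g ∈ AutSet B, g a = b

def EmbedsVia {N M : Type*} {ι : Type} {ar : ι → ℕ} (X : Struct N ι ar) (B : Struct M ι ar)
    (e : N → M) : Prop :=
  Function.Injective e ∧ ∀ (i : ι) (x : Fin (ar i) → N), X i x ↔ B i fun t => e (x t)

def Embeds {N M : Type*} {ι : Type} {ar : ι → ℕ} (X : Struct N ι ar) (B : Struct M ι ar) :
    Prop :=
  ∃ e, EmbedsVia X B e

def RestrictStruct {N : Type*} {ι : Type} {ar : ι → ℕ} (X : Struct N ι ar) (s : Set N) :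
    Struct s ι ar := fun i x => X i fun t => (x t : N)

/-- The age of `B` has no minimal bound of size 3. -/
def NoMinBound3 {M : Type*} {ι : Type} {ar : ι → ℕ} (B : Struct M ι ar) : Prop :=
  ¬ ∃ X : Struct (Fin 3) ι ar, ¬ Embeds X B ∧
    ∀ s : Finset (Fin 3), s ≠ Finset.univ →
      Embeds (RestrictStruct X (s : Set (Fin 3))) B

def IsEndo {M : Type*} {ι : Type} {ar : ι → ℕ} (B : Struct M ι ar) (e : M → M) : Prop :=
  ∀ (i : ι) (x : Fin (ar i) → M), B i x → B i fun t => e (x t)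

/-- Model-complete core (for structures): every endomorphism agrees with an automorphism
on every finite set. -/
def MCCoreStruct {M : Type*} {ι : Type} {ar : ι → ℕ} (B : Struct M ι ar) : Prop :=
  ∀ e : M → M, IsEndo B e → ∀ s : Finset M, ∃ g ∈ AutSet B, ∀ x ∈ s, g x = e x

/-- The polymorphism clone of a relational structure. -/
def PolOps {M : Type*} {ι : Type} {ar : ι → ℕ} (B : Struct M ι ar) :
    ∀ k : ℕ, Set ((Fin k → M) → M) :=
  fun k => {f | ∀ (i : ι) (t : Fin k → Fin (ar i) → M),
    (∀ j, B i (t j)) → B i fun p => f fun j => t j p}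

def DependsOn {M : Type*} {k : ℕ} (f : (Fin k → M) → M) (i : Fin k) : Prop :=
  ∃ x y : Fin k → M, (∀ j, j ≠ i → x j = y j) ∧ f x ≠ f y

def Essential {M : Type*} {k : ℕ} (f : (Fin k → M) → M) : Prop :=
  ∃ i j, i ≠ j ∧ DependsOn f i ∧ DependsOn f j

/-! ### Tournaments -/

structure IsTournament {T : Type*} (E : T → T → Prop) : Prop where
  irrefl : ∀ x, ¬ E x x
  asymm : ∀ x y, E x y → ¬ E y x
  total : ∀ x y, x ≠ y → E x y ∨ E y x

/-- A binary relation viewed as a relational structure with a single binary relation. -/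
def TS {T : Type*} (E : T → T → Prop) : Struct T Unit (fun _ => 2) :=
  fun _ x => E (x 0) (x 1)

/-- Universality for tournaments: every finite tournament embeds. -/
def UnivTournament {T : Type*} (E : T → T → Prop) : Prop :=
  ∀ (m : ℕ) (R : Fin m → Fin m → Prop), IsTournament R → Embeds (TS R) (TS E)

/-- The pure-equality structure (empty signature). -/
def TrivSig : PEmpty → ℕ := fun e => e.elim

def EqStruct (T : Type*) : Struct T PEmpty TrivSig := fun i => i.elim

/-- `f` preserves `G`-orbit-equivalence on injective tuples. -/
def PreservesOrbInj {M : Type*} (G : Set (Equiv.Perm M)) {k : ℕ}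
    (f : (Fin k → M) → M) : Prop :=
  ∀ (m : ℕ) (xs ys : Fin k → Fin m → M), (∀ i, Function.Injective (xs i)) →
    (∀ i, Function.Injective (ys i)) → (∀ i, OrbEq G (xs i) (ys i)) →
    OrbEq G (appN f xs) (appN f ys)

/-!
Take `b, c` disjoint, `η`-equivalent and in one `G`-orbit, all `~`-equivalent to `a`. Since `G`
fixes the `~`-classes, the whole orbit of `b` lies in `S` and in the `~`-class of `a`, hence in
`S'`. The restriction of `η` to this orbit is a `G`-invariant equivalence relation relating the
disjoint tuples `b` and `c`, so by `n`-primitivity it is full: the orbit of `b` lies in one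
`η`-class.
-/

section

variable {A : Type*} {n : ℕ} {G : Subgroup (Equiv.Perm A)}

theorem orbEq_refl (b : Fin n → A) : OrbEq (G : Set (Equiv.Perm A)) b b :=
  ⟨1, G.one_mem, rfl⟩

theorem OrbEq.permTup {b x : Fin n → A} (hx : OrbEq (G : Set (Equiv.Perm A)) b x)
    {g : Equiv.Perm A} (hg : g ∈ G) : OrbEq (G : Set (Equiv.Perm A)) b (permTup g x) := by
  obtain ⟨u, hu, rfl⟩ := hx
  exact ⟨g * u, G.mul_mem hg hu, rfl⟩

theorem ClassesInv.mem_and_rel_of_orbEq {S : Set (Fin n → A)}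
    {r : (Fin n → A) → (Fin n → A) → Prop} (hr : EqvOn S r)
    (hinv : ClassesInv (G : Set (Equiv.Perm A)) S r) {b x : Fin n → A} (hb : b ∈ S)
    (hx : OrbEq (G : Set (Equiv.Perm A)) b x) : x ∈ S ∧ r b x := by
  obtain ⟨g, hg, rfl⟩ := hx
  have hgb : r (permTup g b) b := hinv g hg b hb
  exact ⟨(hr.dom hgb).1, hr.symm hgb⟩

def orbitRestrict (G : Set (Equiv.Perm A)) (b : Fin n → A)
    (η : (Fin n → A) → (Fin n → A) → Prop) (x y : Fin n → A) : Prop :=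
  OrbEq G b x ∧ OrbEq G b y ∧ η x y

theorem EqvOn.orbitRestrict {S' : Set (Fin n → A)} {η : (Fin n → A) → (Fin n → A) → Prop}
    (hη : EqvOn S' η) {b : Fin n → A}
    (horb : ∀ x, OrbEq (G : Set (Equiv.Perm A)) b x → x ∈ S') :
    EqvOn {x | OrbEq (G : Set (Equiv.Perm A)) b x} (orbitRestrict G b η) where
  refl x hx := ⟨hx, hx, hη.refl x (horb x hx)⟩
  symm := fun ⟨hx, hy, hxy⟩ => ⟨hy, hx, hη.symm hxy⟩
  trans := fun ⟨hx, _, hxy⟩ ⟨_, hz, hyz⟩ => ⟨hx, hz, hη.trans hxy hyz⟩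
  dom := fun ⟨hx, hy, _⟩ => ⟨hx, hy⟩

theorem GRelInv.orbitRestrict {η : (Fin n → A) → (Fin n → A) → Prop}
    (hη : GRelInv (G : Set (Equiv.Perm A)) η) (b : Fin n → A) :
    GRelInv (G : Set (Equiv.Perm A)) (orbitRestrict G b η) :=
  fun g hg x y ⟨hx, hy, hxy⟩ => ⟨hx.permTup hg, hy.permTup hg, hη g hg x y hxy⟩

theorem PrimitiveN.rel_of_orbEq {S' : Set (Fin n → A)}
    {η : (Fin n → A) → (Fin n → A) → Prop} (hprim : PrimitiveN (G : Set (Equiv.Perm A)) n)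
    (hη : EqvOn S' η) (hηG : GRelInv (G : Set (Equiv.Perm A)) η) {b c : Fin n → A}
    (horb : ∀ x, OrbEq (G : Set (Equiv.Perm A)) b x → x ∈ S')
    (hbc : η b c) (hbc_orb : OrbEq (G : Set (Equiv.Perm A)) b c) (hdisj : DisjTup b c)
    {x : Fin n → A} (hx : OrbEq (G : Set (Equiv.Perm A)) b x) : η b x :=
  (hprim b _ (hη.orbitRestrict horb) (hηG.orbitRestrict b)
    ⟨b, c, ⟨orbEq_refl b, hbc_orb, hbc⟩, hdisj⟩ b x (orbEq_refl b) hx).2.2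

end

theorem presmooth_implies_smooth_general {A : Type*} (n : ℕ)
    (G : Subgroup (Equiv.Perm A))
    (S S' : Set (Fin n → A)) (r η : (Fin n → A) → (Fin n → A) → Prop)
    (hr : EqvOn S r)
    (hprim : PrimitiveN (G : Set (Equiv.Perm A)) n)
    (hclassinv : ClassesInv (G : Set (Equiv.Perm A)) S r)
    (happrox : ApproxOf S S' r η)
    (hηG : GRelInv (G : Set (Equiv.Perm A)) η)
    (hpre : Presmooth (G : Set (Equiv.Perm A)) S r η) :
    Smooth (G : Set (Equiv.Perm A)) S r η := by
  obtain ⟨hSS', hη, -⟩ := happrox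
  intro a ha
  obtain ⟨b, c, hbS, -, hab, -, hbc, hbc_orb, hdisj⟩ := hpre a ha
  have horbit : ∀ x, OrbEq (G : Set (Equiv.Perm A)) b x → x ∈ S ∧ r a x := fun x hx =>
    let ⟨hxS, hbx⟩ := hclassinv.mem_and_rel_of_orbEq hr hbS hx
    ⟨hxS, hr.trans hab hbx⟩
  refine ⟨b, hbS, hab, fun x hx => ⟨(horbit x hx).1, (horbit x hx).2, ?_⟩⟩
  exact hprim.rel_of_orbEq hη hηG (fun y hy => hSS' (horbit y hy).1) hbc hbc_orb hdisj hx

/-- a presmooth approximation is smooth when the group is n-"primitive". -/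
theorem presmooth_implies_smooth {A : Type*} (n : ℕ) (hn : 1 ≤ n)
    (G : Subgroup (Equiv.Perm A))
    (S S' : Set (Fin n → A)) (r η : (Fin n → A) → (Fin n → A) → Prop)
    (hr : EqvOn S r)
    (hprim : PrimitiveN (G : Set (Equiv.Perm A)) n)
    (hclassinv : ClassesInv (G : Set (Equiv.Perm A)) S r)
    (happrox : ApproxOf S S' r η)
    (hηG : GRelInv (G : Set (Equiv.Perm A)) η)
    (hpre : Presmooth (G : Set (Equiv.Perm A)) S r η) :
    Smooth (G : Set (Equiv.Perm A)) S r η :=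
  presmooth_implies_smooth_general n G S S' r η hr hprim hclassinv happrox hηG hpre

end Paper
end

section
/- The automorphism group of the universal homogeneous tournament T is n-"primitive" for all n ≥ 1: for every n ≥ 1, every Aut(T)-orbit O of n-tuples, and every Aut(T)-invariant equivalence relation ~ on O, if ~ contains a pair (a,b) of disjoint tuples, then ~ is the full relation on O. -/
namespace Paper

/-!
Let `r a b` with `a`, `b` disjoint, and let `c`, `e` lie in the orbit. By the extension property
there is a copy `d₁` of `b`, disjoint from `e`, with `(c, d₁)` of the same type as `(a, b)`, and
then a copy `d₂` of `b` with both `(d₁, d₂)` and `(e, d₂)` of the type of `(a, b)`; the two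
requirements on `d₂` do not conflict because `d₁` and `e` are disjoint. In a homogeneous
tournament pairs of tuples of the same type are automorphic, so `c r d₁ r d₂ r e`.
-/

section Tournament

variable {T : Type*} {E : T → T → Prop}

theorem IsTournament.swap_iff_not (hE : IsTournament E) {u v : T} (h : u ≠ v) :
    E v u ↔ ¬ E u v :=
  ⟨hE.asymm v u, (hE.total u v h).resolve_left⟩

theorem IsTournament.comap (hE : IsTournament E) {α : Type*} {f : α → T}
    (hf : Function.Injective f) : IsTournament fun i j => E (f i) (f j) :=
  ⟨fun i => hE.irrefl (f i), fun i j => hE.asymm (f i) (f j),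
    fun i j hij => hE.total (f i) (f j) (hf.ne hij)⟩

theorem IsTournament.injective_of_iff {α : Type*} {R : α → α → Prop} (hR : IsTournament R)
    (hE : IsTournament E) {e : α → T} (he : ∀ i j, R i j ↔ E (e i) (e j)) :
    Function.Injective e := by
  intro i j hij
  by_contra hne
  rcases hR.total i j hne with h | h
  · exact hE.irrefl (e j) (hij ▸ (he i j).mp h)
  · exact hE.irrefl (e j) (hij ▸ (he j i).mp h)

theorem isAut_TS_iff {g : Equiv.Perm T} : IsAut (TS E) g ↔ ∀ u v, E u v ↔ E (g u) (g v) :=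
  ⟨fun h u v => h () ![u, v], fun h _ x => h (x 0) (x 1)⟩

/-- Two tuples with the same quantifier-free type in the tournament `E`. -/
def SameType (E : T → T → Prop) {ι : Type*} (x y : ι → T) : Prop :=
  ∀ i j, E (x i) (x j) ↔ E (y i) (y j)

namespace SameType

variable {ι : Type*} {x y z : ι → T}

theorem symm (h : SameType E x y) : SameType E y x := fun i j => (h i j).symm

theorem trans (hxy : SameType E x y) (hyz : SameType E y z) : SameType E x z :=
  fun i j => (hxy i j).trans (hyz i j)

/-- In a tournament, equality is the absence of an edge in either direction, so it is part of
the type. -/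
theorem factorsThrough (hE : IsTournament E) (h : SameType E x y) :
    y.FactorsThrough x := by
  intro i j hx
  by_contra hy
  rcases hE.total _ _ hy with hij | hji
  · exact hE.irrefl (x j) (hx ▸ (h i j).mpr hij)
  · exact hE.irrefl (x j) (hx ▸ (h j i).mpr hji)

theorem sumElim (hE : IsTournament E) {κ : Type*} {x' : ι → T} {y y' : κ → T}
    (hx : SameType E x x') (hy : SameType E y y') (hxy : ∀ i j, x i ≠ y j)
    (hxy' : ∀ i j, x' i ≠ y' j) (hcross : ∀ i j, E (x i) (y j) ↔ E (x' i) (y' j)) :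
    SameType E (Sum.elim x y) (Sum.elim x' y') := by
  rintro (i | i) (j | j)
  · exact hx i j
  · exact hcross i j
  · simp only [Sum.elim_inr, Sum.elim_inl]
    rw [hE.swap_iff_not (hxy j i), hE.swap_iff_not (hxy' j i), hcross j i]
  · exact hy i j

end SameType

theorem sameType_of_orbEq {n : ℕ} {a b : Fin n → T} (h : OrbEq (AutSet (TS E)) a b) :
    SameType E a b := by
  obtain ⟨g, hg, rfl⟩ := h
  exact fun i j => isAut_TS_iff.mp hg (a i) (a j)

theorem _root_.Function.FactorsThrough.sumElim {α β γ : Type*} {x : α → T} {y : β → T}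
    {p : α → γ} {q : β → γ} (hp : p.FactorsThrough x) (hq : q.FactorsThrough y)
    (hxy : ∀ i j, x i ≠ y j) : (Sum.elim p q).FactorsThrough (Sum.elim x y) := by
  rintro (i | i) (j | j) h
  · exact hp h
  · exact absurd h (hxy i j)
  · exact absurd h.symm (hxy j i)
  · exact hq h

theorem exists_aut_of_sameType (hE : IsTournament E) (hhom : Homogeneous (TS E))
    {ι : Type*} [Finite ι] {x y : ι → T} (h : SameType E x y) :
    ∃ g ∈ AutSet (TS E), ∀ i, g (x i) = y i := by
  set f : T → T := Function.extend x y id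
  have hf : ∀ i, f (x i) = y i := (h.factorsThrough hE).extend_apply id
  have hs : ∀ t ∈ (Set.finite_range x).toFinset, ∃ i, x i = t := by simp
  obtain ⟨g, hg, hgf⟩ := hhom (Set.finite_range x).toFinset f
    (fun u hu v hv huv => by
      obtain ⟨i, rfl⟩ := hs u hu
      obtain ⟨j, rfl⟩ := hs v hv
      rw [hf, hf] at huv
      exact h.symm.factorsThrough hE huv)
    (fun _ z hz => by
      obtain ⟨i, hi⟩ := hs (z 0) (hz 0)
      obtain ⟨j, hj⟩ := hs (z 1) (hz 1)
      show E (z 0) (z 1) ↔ E (f (z 0)) (f (z 1))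
      rw [← hi, ← hj, hf, hf]
      exact h i j)
  exact ⟨g, hg, fun i => (hgf (x i) (by simp)).trans (hf i)⟩

theorem GRelInv.rel_of_sameType (hE : IsTournament E) (hhom : Homogeneous (TS E)) {n : ℕ}
    {r : (Fin n → T) → (Fin n → T) → Prop} (hinv : GRelInv (AutSet (TS E)) r)
    {a b c d : Fin n → T} (hab : r a b) (h : SameType E (Sum.elim a b) (Sum.elim c d)) :
    r c d := by
  obtain ⟨g, hg, hgab⟩ := exists_aut_of_sameType hE hhom h
  have hgac : permTup g a = c := funext fun i => hgab (Sum.inl i)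
  have hgbd : permTup g b = d := funext fun i => hgab (Sum.inr i)
  exact hgac ▸ hgbd ▸ hinv g hg a b hab

theorem UnivTournament.exists_embedding (huniv : UnivTournament E) {α : Type*} [Finite α]
    {R : α → α → Prop} (hR : IsTournament R) : ∃ e : α → T, ∀ i j, R i j ↔ E (e i) (e j) := by
  obtain ⟨m, ⟨σ⟩⟩ := Finite.exists_equiv_fin α
  obtain ⟨e, -, he⟩ := huniv m _ (hR.comap σ.symm.injective)
  exact ⟨e ∘ σ, fun i j => by simpa [TS] using he () ![σ i, σ j]⟩

def glueRel {α β : Type*} (R : α → α → Prop) (R' : β → β → Prop) (o : α → β → Prop) :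
    α ⊕ β → α ⊕ β → Prop
  | .inl a, .inl a' => R a a'
  | .inr b, .inr b' => R' b b'
  | .inl a, .inr b => o a b
  | .inr b, .inl a => ¬ o a b

theorem IsTournament.glueRel {α β : Type*} {R : α → α → Prop} {R' : β → β → Prop}
    (hR : IsTournament R) (hR' : IsTournament R') (o : α → β → Prop) :
    IsTournament (glueRel R R' o) := by
  refine ⟨?_, ?_, ?_⟩
  · rintro (a | b)
    exacts [hR.irrefl a, hR'.irrefl b]
  · rintro (a | b) (a' | b') h
    exacts [hR.asymm a a' h, not_not_intro h, h, hR'.asymm b b' h]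
  · rintro (a | b) (a' | b') h
    exacts [hR.total a a' (h ∘ congrArg _), em _, (em _).symm, hR'.total b b' (h ∘ congrArg _)]

theorem exists_embedding_extending (hE : IsTournament E) (hhom : Homogeneous (TS E))
    (huniv : UnivTournament E) {α β : Type*} [Finite α] [Finite β] {R : α ⊕ β → α ⊕ β → Prop}
    (hR : IsTournament R) {x : α → T} (hx : ∀ a a', R (.inl a) (.inl a') ↔ E (x a) (x a')) :
    ∃ e : α ⊕ β → T, (∀ i j, R i j ↔ E (e i) (e j)) ∧ ∀ a, e (.inl a) = x a := by
  obtain ⟨f, hf⟩ := huniv.exists_embedding hR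
  obtain ⟨g, hg, hgf⟩ := exists_aut_of_sameType (x := f ∘ .inl) (y := x) hE hhom
    fun a a' => (hf _ _).symm.trans (hx a a')
  exact ⟨g ∘ f, fun i j => (hf i j).trans (isAut_TS_iff.mp hg _ _), hgf⟩

theorem exists_copy_over (hE : IsTournament E) (hhom : Homogeneous (TS E))
    (huniv : UnivTournament E) {S : Set T} (hS : S.Finite) {ι κ : Type*} [Finite ι] [Finite κ]
    (x p : ι → T) (q : κ → T) (hpx : p.FactorsThrough x) :
    ∃ d : κ → T, SameType E q d ∧ (∀ i j, x i ≠ d j) ∧ (∀ j, d j ∉ S) ∧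
      ∀ i j, E (p i) (q j) ↔ E (x i) (d j) := by
  set A := S ∪ Set.range x
  have : Finite A := (hS.union (Set.finite_range x)).to_subtype
  set o : A → Set.range q → Prop := fun s t => ∃ i, x i = s ∧ E (p i) t
  have ho : ∀ i j, o ⟨x i, .inr ⟨i, rfl⟩⟩ ⟨q j, ⟨j, rfl⟩⟩ ↔ E (p i) (q j) :=
    fun i j => ⟨fun ⟨_, hi', h⟩ => hpx hi' ▸ h, fun h => ⟨i, rfl, h⟩⟩
  have hR := (hE.comap Subtype.val_injective).glueRel (hE.comap Subtype.val_injective) o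
  obtain ⟨e, he, heA⟩ := exists_embedding_extending hE hhom huniv hR (x := Subtype.val)
    fun _ _ => Iff.rfl
  have he_inj := hR.injective_of_iff hE he
  set d : κ → T := fun j => e (.inr ⟨q j, j, rfl⟩)
  have hd : ∀ (s : A) j, (s : T) ≠ d j := fun s _ h => Sum.inl_ne_inr (he_inj ((heA s).trans h))
  refine ⟨d, fun j j' => he (.inr ⟨q j, j, rfl⟩) (.inr ⟨q j', j', rfl⟩),
    fun i => hd ⟨x i, .inr ⟨i, rfl⟩⟩, fun j hj => hd ⟨d j, .inl hj⟩ j rfl, fun i j => ?_⟩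
  rw [← ho]
  exact (he (.inl ⟨x i, .inr ⟨i, rfl⟩⟩) (.inr ⟨q j, j, rfl⟩)).trans (by rw [heA])

end Tournament

theorem tournament_primitive_general {T : Type*} (E : T → T → Prop)
    (hE : IsTournament E) (hhom : Homogeneous (TS E)) (huniv : UnivTournament E) :
    ∀ n : ℕ, 1 ≤ n → PrimitiveN (AutSet (TS E)) n := by
  rintro n - a₀ r hr hinv ⟨a, b, hab, hdisj⟩ c e hc he
  obtain ⟨ha, hb⟩ := hr.dom hab
  have htype : ∀ {x y}, OrbEq (AutSet (TS E)) a₀ x → OrbEq (AutSet (TS E)) a₀ y →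
      SameType E x y := fun hx hy => (sameType_of_orbEq hx).symm.trans (sameType_of_orbEq hy)
  obtain ⟨d₁, hbd₁, hcd₁, hd₁e, hcross₁⟩ := exists_copy_over hE hhom huniv
    (Set.finite_range e) c a b ((htype ha hc).symm.factorsThrough hE)
  have hd₁e' : ∀ i j, d₁ i ≠ e j := fun i j h => hd₁e i ⟨j, h.symm⟩
  obtain ⟨d₂, hbd₂, hd₂, -, hcross₂⟩ := exists_copy_over hE hhom huniv Set.finite_empty
    (Sum.elim d₁ e) (Sum.elim a a) b <|
      ((htype ha hb).trans hbd₁).symm.factorsThrough hE |>.sumElim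
        ((htype ha he).symm.factorsThrough hE) hd₁e'
  have r_cd₁ : r c d₁ := hinv.rel_of_sameType hE hhom hab <|
    (htype ha hc).sumElim hE hbd₁ hdisj hcd₁ hcross₁
  have r_d₁d₂ : r d₁ d₂ := hinv.rel_of_sameType hE hhom hab <|
    ((htype ha hb).trans hbd₁).sumElim hE hbd₂ hdisj (fun i => hd₂ (.inl i))
      fun i => hcross₂ (.inl i)
  have r_ed₂ : r e d₂ := hinv.rel_of_sameType hE hhom hab <|
    (htype ha he).sumElim hE hbd₂ hdisj (fun i => hd₂ (.inr i)) fun i => hcross₂ (.inr i)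
  exact hr.trans (hr.trans r_cd₁ r_d₁d₂) (hr.symm r_ed₂)

/-- the automorphism group of the universal homogeneous tournament is
`n`-"primitive" for all `n ≥ 1`. -/
theorem tournament_primitive {T : Type*} [Countable T] (E : T → T → Prop)
    (hE : IsTournament E) (hhom : Homogeneous (TS E)) (huniv : UnivTournament E) :
    ∀ n : ℕ, 1 ≤ n → PrimitiveN (AutSet (TS E)) n :=
  tournament_primitive_general E hE hhom huniv

end Paper
end

section
/- Fundamental theorem of smooth approximations (very smooth case): Let A be a set, C ⊆ D function clones on A, and G a permutation group on A such that D locally interpolates C modulo G. Let (S, ~) be a subfactor of C with G-invariant ~-classes. If ~ has a D-invariant very smooth approximation η with respect to G, then there exists a clone homomorphism from D to the action of C on S/~. Moreover, if ~ has finitely many classes, the homomorphism can be chosen uniformly continuous. -/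
namespace Paper

/-- Local interpolation of `g` by `f` modulo `G`. -/
def Interp {A : Type*} (G : Set (Equiv.Perm A)) {k : ℕ} (f g : (Fin k → A) → A) : Prop :=
  ∀ F : Finset (Fin k → A), ∃ (β : Equiv.Perm A) (α : Fin k → Equiv.Perm A),
    β ∈ G ∧ (∀ i, α i ∈ G) ∧ ∀ x ∈ F, g x = β (f fun i => α i (x i))

/-- Invariance of a subset of the domain under a clone. -/
def SetInv1 {A : Type*} (C : ∀ k : ℕ, Set ((Fin k → A) → A)) (S : Set A) : Prop :=
  ∀ (k : ℕ) (f : (Fin k → A) → A), f ∈ C k → ∀ x : Fin k → A, (∀ i, x i ∈ S) → f x ∈ S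

/-- Invariance of a binary relation on the domain under a clone. -/
def RelInv1 {A : Type*} (C : ∀ k : ℕ, Set ((Fin k → A) → A)) (r : A → A → Prop) : Prop :=
  ∀ (k : ℕ) (f : (Fin k → A) → A), f ∈ C k → ∀ x y : Fin k → A,
    (∀ i, r (x i) (y i)) → r (f x) (f y)

/-! Send each `f ∈ D` to some `g ∈ C` that it locally interpolates modulo `G`. Since `η` is
very smooth and `D`-invariant, `g x` and `f x` are `η`-related for every `x` in `S`, and `η`
refines `r` on `S`; so the clone identities, which hold exactly in `D`, hold for the chosen
interpolants modulo `r`. With finitely many `r`-classes, `f` on tuples of class representatives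
already determines its interpolant modulo `r`. -/

section VerySmooth

variable {A : Type*} {C D : ∀ k : ℕ, Set ((Fin k → A) → A)}
  {G : Subgroup (Equiv.Perm A)} {S S' : Set A} {r η : A → A → Prop}

open Classical in
/-- A chosen member of `C k` locally interpolated by `f` modulo `G`, or `f` itself if there
is none. -/
noncomputable def interpolant (C : ∀ k : ℕ, Set ((Fin k → A) → A)) (G : Set (Equiv.Perm A))
    {k : ℕ} (f : (Fin k → A) → A) : (Fin k → A) → A :=
  if h : ∃ g ∈ C k, Interp G f g then h.choose else f

theorem interpolant_spec {G : Set (Equiv.Perm A)} {k : ℕ} {f : (Fin k → A) → A}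
    (h : ∃ g ∈ C k, Interp G f g) : interpolant C G f ∈ C k ∧ Interp G f (interpolant C G f) := by
  rw [interpolant, dif_pos h]
  exact h.choose_spec

theorem perm_mem_of_classesInv (hr : EqvOn S r)
    (hclassinv : ∀ g ∈ (G : Set (Equiv.Perm A)), ∀ a ∈ S, r (g a) a)
    {g : Equiv.Perm A} (hg : g ∈ G) {a : A} (ha : a ∈ S) : g a ∈ S :=
  (hr.dom (hclassinv g hg a ha)).1

/-- On `x`, `g x = β (f (α x))` with `β, α i ∈ G`; very smoothness makes both `β` and each
`α i` invisible to `η`, and `D`-invariance of `η` carries the inner ones through `f`. -/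
theorem Interp.rel_apply (hSinv : SetInv1 C S) (hr : EqvOn S r)
    (hclassinv : ∀ g ∈ (G : Set (Equiv.Perm A)), ∀ a ∈ S, r (g a) a)
    (hη : EqvOn S' η) (hηD : RelInv1 D η)
    (hvs : ∀ a b, a ∈ S → b ∈ S → (∃ g ∈ (G : Set (Equiv.Perm A)), g a = b) → η a b)
    {k : ℕ} {f g : (Fin k → A) → A} (hf : f ∈ D k) (hg : g ∈ C k)
    (hfg : Interp (G : Set (Equiv.Perm A)) f g) {x : Fin k → A} (hx : ∀ j, x j ∈ S) :
    η (g x) (f x) := by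
  obtain ⟨β, α, hβ, hα, hgx⟩ := hfg {x}
  have hgx : g x = β (f fun i => α i (x i)) := hgx x (Finset.mem_singleton_self x)
  have hgxS : g x ∈ S := hSinv k g hg x hx
  have hfαxS : (f fun i => α i (x i)) ∈ S := by
    simpa [hgx] using perm_mem_of_classesInv hr hclassinv (G.inv_mem hβ) hgxS
  have hαx : ∀ i, η (α i (x i)) (x i) := fun i =>
    hvs _ _ (perm_mem_of_classesInv hr hclassinv (hα i) (hx i)) (hx i)
      ⟨(α i)⁻¹, G.inv_mem (hα i), Equiv.symm_apply_apply _ _⟩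
  have hβ : η (f fun i => α i (x i)) (g x) := hvs _ _ hfαxS hgxS ⟨β, hβ, hgx.symm⟩
  exact hη.trans (hη.symm hβ) (hηD k f hf _ _ hαx)

def IsRetractionModulo (C D : ∀ k : ℕ, Set ((Fin k → A) → A)) (S : Set A) (η : A → A → Prop)
    (ξ : ∀ k : ℕ, ((Fin k → A) → A) → ((Fin k → A) → A)) : Prop :=
  ∀ (k : ℕ) (f : (Fin k → A) → A), f ∈ D k →
    ξ k f ∈ C k ∧ ∀ x : Fin k → A, (∀ j, x j ∈ S) → η (ξ k f x) (f x)

theorem isRetractionModulo_interpolant (hinterp : ∀ (k : ℕ) (f : (Fin k → A) → A), f ∈ D k →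
      ∃ g ∈ C k, Interp (G : Set (Equiv.Perm A)) f g)
    (hSinv : SetInv1 C S) (hr : EqvOn S r)
    (hclassinv : ∀ g ∈ (G : Set (Equiv.Perm A)), ∀ a ∈ S, r (g a) a)
    (hη : EqvOn S' η) (hηD : RelInv1 D η)
    (hvs : ∀ a b, a ∈ S → b ∈ S → (∃ g ∈ (G : Set (Equiv.Perm A)), g a = b) → η a b) :
    IsRetractionModulo C D S η fun _ f => interpolant C G f := by
  intro k f hf
  obtain ⟨hmem, hinterp⟩ := interpolant_spec (hinterp k f hf)
  exact ⟨hmem, fun x hx => hinterp.rel_apply hSinv hr hclassinv hη hηD hvs hf hmem hx⟩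

namespace IsRetractionModulo

variable {ξ : ∀ k : ℕ, ((Fin k → A) → A) → ((Fin k → A) → A)}

theorem rel_proj (hξ : IsRetractionModulo C D S η ξ) (hD : IsClone D) (hSinv : SetInv1 C S)
    (hrefine : ∀ a b, a ∈ S → b ∈ S → η a b → r a b)
    {k : ℕ} (i : Fin k) {x : Fin k → A} (hx : ∀ j, x j ∈ S) :
    r (ξ k (fun y => y i) x) (x i) :=
  have hproj := hξ k _ (hD.1 k i)
  hrefine _ _ (hSinv k _ hproj.1 x hx) (hx i) (hproj.2 x hx)

theorem rel_comp (hξ : IsRetractionModulo C D S η ξ) (hD : IsClone D) (hSinv : SetInv1 C S)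
    (hη : EqvOn S' η) (hηD : RelInv1 D η) (hrefine : ∀ a b, a ∈ S → b ∈ S → η a b → r a b)
    {k m : ℕ} {f : (Fin k → A) → A} {g : Fin k → (Fin m → A) → A} (hf : f ∈ D k)
    (hg : ∀ i, g i ∈ D m) {x : Fin m → A} (hx : ∀ j, x j ∈ S) :
    r (ξ m (fun y => f fun i => g i y) x) (ξ k f fun i => ξ m (g i) x) := by
  have hfg := hξ m _ (hD.2 k m f g hf hg)
  have hy : ∀ i, ξ m (g i) x ∈ S := fun i => hSinv m _ (hξ m (g i) (hg i)).1 x hx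
  have hfy : η (f fun i => ξ m (g i) x) (f fun i => g i x) :=
    hηD k f hf _ _ fun i => (hξ m (g i) (hg i)).2 x hx
  have hξfy := (hξ k f hf).2 _ hy
  exact hrefine _ _ (hSinv m _ hfg.1 x hx) (hSinv k _ (hξ k f hf).1 _ hy)
    (hη.trans (hfg.2 x hx) (hη.symm (hη.trans hξfy hfy)))

theorem exists_finset_rel_of_eqOn (hξ : IsRetractionModulo C D S η ξ) (hSinv : SetInv1 C S)
    (hrinv : RelInv1 C r) (hr : EqvOn S r) (hη : EqvOn S' η)
    (hrefine : ∀ a b, a ∈ S → b ∈ S → η a b → r a b)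
    {n : ℕ} (reps : Fin n → A) (hreps : ∀ a ∈ S, ∃ i, r a (reps i)) (k : ℕ) :
    ∃ B : Finset (Fin k → A), ∀ f g : (Fin k → A) → A,
      f ∈ D k → g ∈ D k → (∀ x ∈ B, f x = g x) →
      ∀ x : Fin k → A, (∀ j, x j ∈ S) → r (ξ k f x) (ξ k g x) := by
  classical
  refine ⟨Finset.univ.image fun σ : Fin k → Fin n => reps ∘ σ, fun f g hf hg hfg x hx => ?_⟩
  choose σ hσ using fun j => hreps (x j) (hx j)
  have hσS : ∀ j, reps (σ j) ∈ S := fun j => (hr.dom (hσ j)).2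
  have hfσ : f (reps ∘ σ) = g (reps ∘ σ) := hfg _ (Finset.mem_image_of_mem _ (Finset.mem_univ σ))
  have hξf := hξ k f hf
  have hξg := hξ k g hg
  have hrσ : r (ξ k f (reps ∘ σ)) (ξ k g (reps ∘ σ)) :=
    hrefine _ _ (hSinv k _ hξf.1 _ hσS) (hSinv k _ hξg.1 _ hσS)
      (hη.trans (hξf.2 _ hσS) (hfσ ▸ hη.symm (hξg.2 _ hσS)))
  exact hr.trans (hrinv k _ hξf.1 _ _ hσ) (hr.trans hrσ (hr.symm (hrinv k _ hξg.1 _ _ hσ)))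

end IsRetractionModulo

end VerySmooth

theorem fundamental_theorem_very_smooth_general {A : Type*}
    (C D : ∀ k : ℕ, Set ((Fin k → A) → A))
    (hD : IsClone D)
    (G : Subgroup (Equiv.Perm A))
    (hinterp : ∀ (k : ℕ) (f : (Fin k → A) → A), f ∈ D k →
      ∃ g ∈ C k, Interp (G : Set (Equiv.Perm A)) f g)
    (S : Set A) (r : A → A → Prop)
    (hSinv : SetInv1 C S) (hrinv : RelInv1 C r) (hr : EqvOn S r)
    (hclassinv : ∀ g ∈ (G : Set (Equiv.Perm A)), ∀ a ∈ S, r (g a) a)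
    (S' : Set A) (η : A → A → Prop)
    (hη : EqvOn S' η)
    (hrefine : ∀ a b, a ∈ S → b ∈ S → η a b → r a b)
    (hηD : RelInv1 D η)
    (hvs : ∀ a b, a ∈ S → b ∈ S → (∃ g ∈ (G : Set (Equiv.Perm A)), g a = b) → η a b) :
    ∃ ξ : ∀ k : ℕ, ((Fin k → A) → A) → ((Fin k → A) → A),
      (∀ (k : ℕ) (f : (Fin k → A) → A), f ∈ D k → ξ k f ∈ C k) ∧
      (∀ (k : ℕ) (i : Fin k) (x : Fin k → A), (∀ j, x j ∈ S) → r (ξ k (fun y => y i) x) (x i)) ∧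
      (∀ (k m : ℕ) (f : (Fin k → A) → A) (g : Fin k → (Fin m → A) → A),
        f ∈ D k → (∀ i, g i ∈ D m) → ∀ x : Fin m → A, (∀ j, x j ∈ S) →
        r (ξ m (fun y => f fun i => g i y) x) (ξ k f fun i => ξ m (g i) x)) ∧
      ((∃ (mcl : ℕ) (reps : Fin mcl → A), ∀ a ∈ S, ∃ i, r a (reps i)) →
        ∀ k : ℕ, ∃ B : Finset (Fin k → A), ∀ f g : (Fin k → A) → A,
          f ∈ D k → g ∈ D k → (∀ x ∈ B, f x = g x) →
          ∀ x : Fin k → A, (∀ j, x j ∈ S) → r (ξ k f x) (ξ k g x)) := by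
  have hξ := isRetractionModulo_interpolant hinterp hSinv hr hclassinv hη hηD hvs
  refine ⟨_, fun k f hf => (hξ k f hf).1, fun k i x hx => hξ.rel_proj hD hSinv hrefine i hx,
    fun k m f g hf hg x hx => hξ.rel_comp hD hSinv hη hηD hrefine hf hg hx, ?_⟩
  rintro ⟨_, reps, hreps⟩
  exact hξ.exists_finset_rel_of_eqOn hSinv hrinv hr hη hrefine reps hreps

/-- fundamental theorem of smooth approximations, very smooth case:
a `D`-invariant very smooth approximation yields a clone homomorphism from `D` to the
action of `C` on `S/∼` (represented by a map `ξ` into `C` satisfying the homomorphism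
identities modulo `∼` on `S`), uniformly continuous if `∼` has finitely many classes. -/
theorem fundamental_theorem_very_smooth {A : Type*}
    (C D : ∀ k : ℕ, Set ((Fin k → A) → A))
    (hC : IsClone C) (hD : IsClone D) (hCD : ∀ k, C k ⊆ D k)
    (G : Subgroup (Equiv.Perm A))
    (hinterp : ∀ (k : ℕ) (f : (Fin k → A) → A), f ∈ D k →
      ∃ g ∈ C k, Interp (G : Set (Equiv.Perm A)) f g)
    (S : Set A) (r : A → A → Prop)
    (hSinv : SetInv1 C S) (hrinv : RelInv1 C r) (hr : EqvOn S r)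
    (hclassinv : ∀ g ∈ (G : Set (Equiv.Perm A)), ∀ a ∈ S, r (g a) a)
    (S' : Set A) (η : A → A → Prop)
    (hsub : S ⊆ S') (hη : EqvOn S' η)
    (hrefine : ∀ a b, a ∈ S → b ∈ S → η a b → r a b)
    (hηG : ∀ g ∈ (G : Set (Equiv.Perm A)), ∀ a b, η a b → η (g a) (g b))
    (hηD : RelInv1 D η)
    (hvs : ∀ a b, a ∈ S → b ∈ S → (∃ g ∈ (G : Set (Equiv.Perm A)), g a = b) → η a b) :
    ∃ ξ : ∀ k : ℕ, ((Fin k → A) → A) → ((Fin k → A) → A),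
      (∀ (k : ℕ) (f : (Fin k → A) → A), f ∈ D k → ξ k f ∈ C k) ∧
      (∀ (k : ℕ) (i : Fin k) (x : Fin k → A), (∀ j, x j ∈ S) → r (ξ k (fun y => y i) x) (x i)) ∧
      (∀ (k m : ℕ) (f : (Fin k → A) → A) (g : Fin k → (Fin m → A) → A),
        f ∈ D k → (∀ i, g i ∈ D m) → ∀ x : Fin m → A, (∀ j, x j ∈ S) →
        r (ξ m (fun y => f fun i => g i y) x) (ξ k f fun i => ξ m (g i) x)) ∧
      ((∃ (mcl : ℕ) (reps : Fin mcl → A), ∀ a ∈ S, ∃ i, r a (reps i)) →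
        ∀ k : ℕ, ∃ B : Finset (Fin k → A), ∀ f g : (Fin k → A) → A,
          f ∈ D k → g ∈ D k → (∀ x ∈ B, f x = g x) →
          ∀ x : Fin k → A, (∀ j, x j ∈ S) → r (ξ k f x) (ξ k g x)) :=
  fundamental_theorem_very_smooth_general C D hD G hinterp S r hSinv hrinv hr hclassinv S' η hη
    hrefine hηD hvs

end Paper
end

section
/- Fundamental theorem of smooth approximations (smooth case): Let A be a set, C ⊆ D function clones on A, and G a permutation group on A such that D locally interpolates C modulo G. Let (S, ~) be a subfactor of C with G-invariant ~-classes. If ~ has a D-invariant smooth approximation η with respect to G, then there exists a minion homomorphism from D to the action of C on S/~, and it is uniformly continuous if ~ has finitely many classes. -/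
/-!
Choose for every `a ∈ S` a point `b a` of the `∼`-class of `a` whose whole `G`-orbit lies in one
`η`-class, and for every `f ∈ D` some `ξ f ∈ C` locally interpolated by `f` modulo `G`. For
`y ∈ Sᵏ`, the `∼`-class of `ξ f y` is then the `∼`-class of the `η`-class of `f (b ∘ y)`, since
`η` is `D`-invariant and the `∼`-classes are `C`- and `G`-invariant. So the `∼`-class of
`ξ f y` depends on `f` only through the values `f (b ∘ y)`: this makes `ξ` commute with minors
up to `∼`, and, when `∼` has finitely many classes, it makes `ξ` depend on finitely many values
of `f` only.
-/

namespace Paper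

section SmoothApproximation

variable {A : Type*} {S S' : Set A} {r η : A → A → Prop}

def Preserves (r : A → A → Prop) {k : ℕ} (f : (Fin k → A) → A) : Prop :=
  ∀ x y : Fin k → A, (∀ i, r (x i) (y i)) → r (f x) (f y)

def TracksVia (S : Set A) (r η : A → A → Prop) (b : A → A) {k : ℕ}
    (f g : (Fin k → A) → A) : Prop :=
  ∀ y : Fin k → A, (∀ i, y i ∈ S) → ∃ z ∈ S, r (g y) z ∧ η (f (b ∘ y)) z

theorem IsClone.minor_mem {D : ∀ k : ℕ, Set ((Fin k → A) → A)} (hD : IsClone D) {k m : ℕ}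
    {f : (Fin k → A) → A} (hf : f ∈ D k) (σ : Fin k → Fin m) :
    (fun y : Fin m → A => f fun i => y (σ i)) ∈ D m :=
  hD.2 k m f _ hf fun i => hD.1 m (σ i)

theorem exists_interpolant_selection {C D : ∀ k : ℕ, Set ((Fin k → A) → A)}
    {G : Set (Equiv.Perm A)} (hinterp : ∀ (k : ℕ) (f : (Fin k → A) → A), f ∈ D k →
      ∃ g ∈ C k, Interp G f g) :
    ∃ ξ : ∀ k : ℕ, ((Fin k → A) → A) → ((Fin k → A) → A),
      ∀ (k : ℕ) (f : (Fin k → A) → A), f ∈ D k → ξ k f ∈ C k ∧ Interp G f (ξ k f) := by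
  choose! ξ hξC hξI using hinterp
  exact ⟨ξ, fun k f hf => ⟨hξC k f hf, hξI k f hf⟩⟩

theorem exists_selector_of_smooth {G : Set (Equiv.Perm A)}
    (hsmooth : ∀ a ∈ S, ∃ b, b ∈ S ∧ r a b ∧ ∀ c, (∃ g ∈ G, g b = c) → c ∈ S ∧ r a c ∧ η b c) :
    ∃ b : A → A, ∀ a ∈ S, r a (b a) ∧ ∀ h ∈ G, η (b a) (h (b a)) := by
  choose! b _ hbr hborb using hsmooth
  exact ⟨b, fun a ha => ⟨hbr a ha, fun h hh => (hborb a ha _ ⟨h, hh, rfl⟩).2.2⟩⟩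

/-- Writing `g (b ∘ y) = β (f fun i => α i (b (y i)))`, the witness is
`z = f fun i => α i (b (y i))`: `β` fixes `r`-classes, and each `α i` moves `b (y i)` inside
its `η`-class. -/
theorem tracksVia_of_interp {G : Subgroup (Equiv.Perm A)} (hr : EqvOn S r)
    (hGr : ∀ h ∈ (G : Set (Equiv.Perm A)), ∀ a ∈ S, r (h a) a) {b : A → A}
    (hb : ∀ a ∈ S, r a (b a) ∧ ∀ h ∈ (G : Set (Equiv.Perm A)), η (b a) (h (b a)))
    {k : ℕ} {f g : (Fin k → A) → A} (hfg : Interp (G : Set (Equiv.Perm A)) f g)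
    (hf : Preserves η f) (hg : Preserves r g) (hgS : ∀ x, (∀ i, x i ∈ S) → g x ∈ S) :
    TracksVia S r η b f g := by
  intro y hy
  have hyw : ∀ i, r (y i) (b (y i)) := fun i => (hb _ (hy i)).1
  obtain ⟨β, α, hβ, hα, hgw⟩ := hfg {b ∘ y}
  have hgw : g (b ∘ y) = β (f fun i => α i (b (y i))) :=
    hgw (b ∘ y) (Finset.mem_singleton_self _)
  have hz : (f fun i => α i (b (y i))) ∈ S := by
    have h := (hr.dom (hGr β⁻¹ (G.inv_mem hβ) _ (hgS (b ∘ y) fun i => (hr.dom (hyw i)).2))).1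
    simpa [hgw] using h
  refine ⟨_, hz, hr.trans (hg y (b ∘ y) hyw) ?_, hf _ _ fun i => (hb _ (hy i)).2 _ (hα i)⟩
  rw [hgw]
  exact hGr β hβ _ hz

theorem TracksVia.rel_of_eq (hr : EqvOn S r) (hη : EqvOn S' η)
    (hrefine : ∀ a b, a ∈ S → b ∈ S → η a b → r a b) {b : A → A} {k m : ℕ}
    {f g : (Fin k → A) → A} {f' g' : (Fin m → A) → A}
    (h : TracksVia S r η b f g) (h' : TracksVia S r η b f' g')
    {y : Fin k → A} {y' : Fin m → A} (hy : ∀ i, y i ∈ S) (hy' : ∀ i, y' i ∈ S)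
    (heq : f (b ∘ y) = f' (b ∘ y')) : r (g y) (g' y') := by
  obtain ⟨z, hz, hgz, hfz⟩ := h y hy
  obtain ⟨z', hz', hgz', hfz'⟩ := h' y' hy'
  rw [← heq] at hfz'
  exact hr.trans hgz (hr.trans (hrefine z z' hz hz' (hη.trans (hη.symm hfz) hfz')) (hr.symm hgz'))

theorem exists_finset_rel_of_tracksVia (hr : EqvOn S r) (hη : EqvOn S' η)
    (hrefine : ∀ a b, a ∈ S → b ∈ S → η a b → r a b) {mcl : ℕ} {reps : Fin mcl → A}
    (hreps : ∀ a ∈ S, ∃ i, r a (reps i)) (b : A → A) (k : ℕ) :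
    ∃ B : Finset (Fin k → A), ∀ {f g f' g' : (Fin k → A) → A},
      TracksVia S r η b f f' → TracksVia S r η b g g' → Preserves r f' → Preserves r g' →
      (∀ x ∈ B, f x = g x) → ∀ x : Fin k → A, (∀ j, x j ∈ S) → r (f' x) (g' x) := by
  classical
  refine ⟨Finset.univ.image fun c : Fin k → Fin mcl => b ∘ reps ∘ c,
    fun hf hg hf' hg' hfg x hx => ?_⟩
  choose c hc using fun j => hreps (x j) (hx j)
  have hcS : ∀ j, reps (c j) ∈ S := fun j => (hr.dom (hc j)).2
  have hrep := hf.rel_of_eq hr hη hrefine hg hcS hcS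
    (hfg _ (Finset.mem_image_of_mem _ (Finset.mem_univ c)))
  exact hr.trans (hf' x _ hc) (hr.trans hrep (hr.symm (hg' x _ hc)))

end SmoothApproximation

theorem fundamental_theorem_smooth_general {A : Type*}
    (C D : ∀ k : ℕ, Set ((Fin k → A) → A))
    (hD : IsClone D)
    (G : Subgroup (Equiv.Perm A))
    (hinterp : ∀ (k : ℕ) (f : (Fin k → A) → A), f ∈ D k →
      ∃ g ∈ C k, Interp (G : Set (Equiv.Perm A)) f g)
    (S : Set A) (r : A → A → Prop)
    (hSinv : SetInv1 C S) (hrinv : RelInv1 C r) (hr : EqvOn S r)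
    (hclassinv : ∀ g ∈ (G : Set (Equiv.Perm A)), ∀ a ∈ S, r (g a) a)
    (S' : Set A) (η : A → A → Prop)
    (hη : EqvOn S' η)
    (hrefine : ∀ a b, a ∈ S → b ∈ S → η a b → r a b)
    (hηD : RelInv1 D η)
    (hsmooth : ∀ a ∈ S, ∃ b, b ∈ S ∧ r a b ∧
      ∀ c, (∃ g ∈ (G : Set (Equiv.Perm A)), g b = c) → c ∈ S ∧ r a c ∧ η b c) :
    ∃ ξ : ∀ k : ℕ, ((Fin k → A) → A) → ((Fin k → A) → A),
      (∀ (k : ℕ) (f : (Fin k → A) → A), f ∈ D k → ξ k f ∈ C k) ∧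
      (∀ (k m : ℕ) (f : (Fin k → A) → A) (σ : Fin k → Fin m),
        f ∈ D k → ∀ x : Fin m → A, (∀ j, x j ∈ S) →
        r (ξ m (fun y => f fun i => y (σ i)) x) (ξ k f fun i => x (σ i))) ∧
      ((∃ (mcl : ℕ) (reps : Fin mcl → A), ∀ a ∈ S, ∃ i, r a (reps i)) →
        ∀ k : ℕ, ∃ B : Finset (Fin k → A), ∀ f g : (Fin k → A) → A,
          f ∈ D k → g ∈ D k → (∀ x ∈ B, f x = g x) →
          ∀ x : Fin k → A, (∀ j, x j ∈ S) → r (ξ k f x) (ξ k g x)) := by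
  obtain ⟨b, hb⟩ := exists_selector_of_smooth hsmooth
  obtain ⟨ξ, hξ⟩ := exists_interpolant_selection hinterp
  have track : ∀ k f, f ∈ D k → TracksVia S r η b f (ξ k f) := fun k f hf =>
    tracksVia_of_interp hr hclassinv hb (hξ k f hf).2 (hηD k f hf)
      (hrinv k _ (hξ k f hf).1) (hSinv k _ (hξ k f hf).1)
  refine ⟨ξ, fun k f hf => (hξ k f hf).1, fun k m f σ hf x hx => ?_, ?_⟩
  · exact (track m _ (hD.minor_mem hf σ)).rel_of_eq hr hη hrefine (track k f hf) hx
      (fun i => hx (σ i)) rfl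
  · rintro ⟨mcl, reps, hreps⟩ k
    obtain ⟨B, hB⟩ := exists_finset_rel_of_tracksVia hr hη hrefine hreps b k
    exact ⟨B, fun f g hf hg => hB (track k f hf) (track k g hg) (hrinv k _ (hξ k f hf).1)
      (hrinv k _ (hξ k g hg).1)⟩

/-- fundamental theorem of smooth approximations, smooth case:
a `D`-invariant smooth approximation yields a minion homomorphism from `D` to the
action of `C` on `S/∼`, uniformly continuous if `∼` has finitely many classes. -/
theorem fundamental_theorem_smooth {A : Type*}
    (C D : ∀ k : ℕ, Set ((Fin k → A) → A))
    (hC : IsClone C) (hD : IsClone D) (hCD : ∀ k, C k ⊆ D k)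
    (G : Subgroup (Equiv.Perm A))
    (hinterp : ∀ (k : ℕ) (f : (Fin k → A) → A), f ∈ D k →
      ∃ g ∈ C k, Interp (G : Set (Equiv.Perm A)) f g)
    (S : Set A) (r : A → A → Prop)
    (hSinv : SetInv1 C S) (hrinv : RelInv1 C r) (hr : EqvOn S r)
    (hclassinv : ∀ g ∈ (G : Set (Equiv.Perm A)), ∀ a ∈ S, r (g a) a)
    (S' : Set A) (η : A → A → Prop)
    (hsub : S ⊆ S') (hη : EqvOn S' η)
    (hrefine : ∀ a b, a ∈ S → b ∈ S → η a b → r a b)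
    (hηG : ∀ g ∈ (G : Set (Equiv.Perm A)), ∀ a b, η a b → η (g a) (g b))
    (hηD : RelInv1 D η)
    (hsmooth : ∀ a ∈ S, ∃ b, b ∈ S ∧ r a b ∧
      ∀ c, (∃ g ∈ (G : Set (Equiv.Perm A)), g b = c) → c ∈ S ∧ r a c ∧ η b c) :
    ∃ ξ : ∀ k : ℕ, ((Fin k → A) → A) → ((Fin k → A) → A),
      (∀ (k : ℕ) (f : (Fin k → A) → A), f ∈ D k → ξ k f ∈ C k) ∧
      (∀ (k m : ℕ) (f : (Fin k → A) → A) (σ : Fin k → Fin m),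
        f ∈ D k → ∀ x : Fin m → A, (∀ j, x j ∈ S) →
        r (ξ m (fun y => f fun i => y (σ i)) x) (ξ k f fun i => x (σ i))) ∧
      ((∃ (mcl : ℕ) (reps : Fin mcl → A), ∀ a ∈ S, ∃ i, r a (reps i)) →
        ∀ k : ℕ, ∃ B : Finset (Fin k → A), ∀ f g : (Fin k → A) → A,
          f ∈ D k → g ∈ D k → (∀ x ∈ B, f x = g x) →
          ∀ x : Fin k → A, (∀ j, x j ∈ S) → r (ξ k f x) (ξ k g x)) :=
  fundamental_theorem_smooth_general C D hD G hinterp S r hSinv hrinv hr hclassinv S' η hη hrefine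
    hηD hsmooth

end Paper
end

section
/- Let A be a first-order reduct of a homogeneous structure B such that B has a free orbit of pairs. If Pol(A) contains an essential function, then Pol(A) contains a binary essential operation. -/
namespace Paper

/-!
Automorphisms of `B` preserve every relation of the reduct. So for a polymorphism `f`, a
coordinate `l` and automorphisms `δ r`, the map `(u, z) ↦ f (δ₁ z, …, u, …, δₖ z)`, with `u` in
place `l`, is a binary polymorphism. If no binary polymorphism is essential and the section
`x ↦ f (β[l := x])` at `β = (δ r q)_r` is not constant, this map depends on `u`, hence not on
`z`: the section is unchanged when `β` is replaced by `(δ r q')_r`. Through a free orbit `O`, any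
two tuples `β`, `γ` are joined by two such moves (`(β r, c r) ∈ O⁻¹`, `(c r, γ r) ∈ O`), so all
sections in direction `l` coincide and `f` depends on coordinate `l` only.
-/

open Function

lemma FODef.iff_apply_of_isAut {M : Type*} {ι : Type} {ar : ι → ℕ} {B : Struct M ι ar}
    {g : Equiv.Perm M} (hg : IsAut B g) {k : ℕ} {R : (Fin k → M) → Prop} (hR : FODef B R)
    (x : Fin k → M) : R x ↔ R fun t => g (x t) := by
  induction hR with
  | basic i => exact hg i x
  | eq => exact g.apply_eq_iff_eq.symm
  | reindex σ _ ih => exact ih (x ∘ σ)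
  | inter _ _ ih₁ ih₂ => exact and_congr (ih₁ x) (ih₂ x)
  | compl _ ih => exact not_congr (ih x)
  | ex _ ih =>
    have hsnoc : ∀ a, (fun t => g (Fin.snoc x a t)) = Fin.snoc (fun t => g (x t)) (g a) := by
      intro a
      funext t
      refine Fin.lastCases ?_ (fun t => ?_) t <;> simp
    constructor
    · rintro ⟨a, ha⟩
      exact ⟨g a, hsnoc a ▸ (ih _).mp ha⟩
    · rintro ⟨a, ha⟩
      refine ⟨g.symm a, (ih _).mpr ?_⟩
      rwa [hsnoc, g.apply_symm_apply]

section Polymorphisms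

variable {M : Type*} {κ : Type} {ar' : κ → ℕ} {A : Struct M κ ar'}

lemma IsAut.isEndo_of_foDef {ι : Type} {ar : ι → ℕ} {B : Struct M ι ar} {g : Equiv.Perm M}
    (hg : IsAut B g) (hA : ∀ j, FODef B (A j)) : IsEndo A g :=
  fun j x hx => ((hA j).iff_apply_of_isAut hg x).mp hx

lemma proj_mem_polOps {m : ℕ} (i : Fin m) : (fun v : Fin m → M => v i) ∈ PolOps A m :=
  fun _ _ ht => ht i

lemma IsEndo.comp_proj_mem_polOps {e : M → M} (he : IsEndo A e) {m : ℕ} (i : Fin m) :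
    (fun v : Fin m → M => e (v i)) ∈ PolOps A m :=
  fun j _ ht => he j _ (ht i)

lemma comp_mem_polOps {k m : ℕ} {f : (Fin k → M) → M} (hf : f ∈ PolOps A k)
    {g : Fin k → (Fin m → M) → M} (hg : ∀ r, g r ∈ PolOps A m) :
    (fun v => f fun r => g r v) ∈ PolOps A m :=
  fun j t ht => hf j _ fun r => hg r j t ht

lemma DependsOn.exists_update_ne {k : ℕ} {f : (Fin k → M) → M} {l : Fin k}
    (h : DependsOn f l) : ∃ β b b', f (update β l b) ≠ f (update β l b') := by
  obtain ⟨x, y, hxy, hne⟩ := h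
  refine ⟨x, x l, y l, ?_⟩
  rwa [update_eq_self, (update_eq_iff.mpr ⟨rfl, hxy⟩ : update x l (y l) = y)]

lemma not_dependsOn_of_update_eq {k : ℕ} {f : (Fin k → M) → M} {β : Fin k → M} {l j : Fin k}
    (hjl : j ≠ l) (h : ∀ γ x, f (update γ l x) = f (update β l x)) : ¬ DependsOn f j := by
  rintro ⟨x, y, hxy, hne⟩
  have hx := h x (x l)
  have hy := h y (y l)
  rw [update_eq_self] at hx hy
  exact hne (by rw [hx, hy, hxy l hjl.symm])

variable (hbin : ∀ h ∈ PolOps A 2, DependsOn h 0 → ¬ DependsOn h 1)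
include hbin

lemma update_eq_of_isEndo {k : ℕ} {f : (Fin k → M) → M} (hf : f ∈ PolOps A k) {l : Fin k}
    {β w : Fin k → M} {q q' : M} (hβw : ∀ r, ∃ e, IsEndo A e ∧ e q = β r ∧ e q' = w r)
    {b b' : M} (hβ : f (update β l b) ≠ f (update β l b')) (x : M) :
    f (update w l x) = f (update β l x) := by
  choose δ hδ hδq hδq' using hβw
  let h : (Fin 2 → M) → M := fun v => f fun r => update (fun r v => δ r (v 1)) l (· 0) r v
  have hh : h ∈ PolOps A 2 := comp_mem_polOps hf fun r => by
    rcases eq_or_ne r l with rfl | hr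
    · simpa using proj_mem_polOps 0
    · simpa [hr] using (hδ r).comp_proj_mem_polOps 1
  have h_apply : ∀ u z, h ![u, z] = f (update (fun r => δ r z) l u) := by
    intro u z
    refine congrArg f (funext fun r => ?_)
    rcases eq_or_ne r l with rfl | hr <;> simp [*]
  have hβ_eq : (fun r => δ r q) = β := funext hδq
  have hw_eq : (fun r => δ r q') = w := funext hδq'
  have h_dep₀ : DependsOn h 0 :=
    ⟨![b, q], ![b', q], by simp [Fin.forall_fin_two], by rwa [h_apply, h_apply, hβ_eq]⟩
  by_contra hne
  exact hbin h hh h_dep₀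
    ⟨![x, q'], ![x, q], by simp [Fin.forall_fin_two], by rwa [h_apply, h_apply, hβ_eq, hw_eq]⟩

lemma update_eq_of_free {G : Set (Equiv.Perm M)} (hG : ∀ g ∈ G, IsEndo A g)
    (hfree : ∃ p : M × M, ∀ a b : M, ∃ c : M,
      (∃ g ∈ G, (g p.1, g p.2) = (c, a)) ∧ (∃ g ∈ G, (g p.1, g p.2) = (c, b)))
    {k : ℕ} {f : (Fin k → M) → M} (hf : f ∈ PolOps A k) {l : Fin k} {β : Fin k → M} {b b' : M}
    (hβ : f (update β l b) ≠ f (update β l b')) (γ : Fin k → M) (x : M) :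
    f (update γ l x) = f (update β l x) := by
  obtain ⟨p, hp⟩ := hfree
  have hendo : ∀ {s t : M}, (∃ g ∈ G, (g p.1, g p.2) = (s, t)) →
      ∃ e, IsEndo A e ∧ e p.1 = s ∧ e p.2 = t :=
    fun ⟨g, hg, hgp⟩ => ⟨g, hG g hg, Prod.ext_iff.mp hgp⟩
  choose c hcβ hcγ using fun r => hp (β r) (γ r)
  have hc : ∀ x, f (update c l x) = f (update β l x) :=
    update_eq_of_isEndo hbin hf (q := p.2) (q' := p.1)
      (fun r => (hendo (hcβ r)).imp fun _ he => ⟨he.1, he.2.2, he.2.1⟩) hβ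
  have hc_dep : f (update c l b) ≠ f (update c l b') := by rwa [hc, hc]
  rw [update_eq_of_isEndo hbin hf (fun r => hendo (hcγ r)) hc_dep x, hc]

end Polymorphisms

theorem binary_essential_general {M : Type*} {ι : Type} {ar : ι → ℕ} {κ : Type} {ar' : κ → ℕ}
    (B : Struct M ι ar) (Ast : Struct M κ ar')
    (hred : ∀ j, FODef B (Ast j))
    (hfree : ∃ p : M × M, ∀ a b : M, ∃ c : M,
      (∃ g ∈ AutSet B, (g p.1, g p.2) = (c, a)) ∧
      (∃ g ∈ AutSet B, (g p.1, g p.2) = (c, b)))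
    (hess : ∃ (k : ℕ) (f : (Fin k → M) → M), f ∈ PolOps Ast k ∧ Essential f) :
    ∃ f ∈ PolOps Ast 2, DependsOn f 0 ∧ DependsOn f 1 := by
  by_contra! hbin
  obtain ⟨k, f, hf, i, j, hij, hi, hj⟩ := hess
  obtain ⟨β, b, b', hβ⟩ := hi.exists_update_ne
  have hAut : ∀ g ∈ AutSet B, IsEndo Ast g := fun g hg => IsAut.isEndo_of_foDef hg hred
  exact not_dependsOn_of_update_eq hij.symm (update_eq_of_free hbin hAut hfree hf hβ) hj

/-- if the base structure has a free orbit of pairs and `Pol(A)` contains an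
essential function, then it contains a binary essential operation. -/
theorem binary_essential {M : Type*} {ι : Type} {ar : ι → ℕ} {κ : Type} {ar' : κ → ℕ}
    (B : Struct M ι ar) (Ast : Struct M κ ar')
    (hhom : Homogeneous B)
    (hred : ∀ j, FODef B (Ast j))
    (hfree : ∃ p : M × M, ∀ a b : M, ∃ c : M,
      (∃ g ∈ AutSet B, (g p.1, g p.2) = (c, a)) ∧
      (∃ g ∈ AutSet B, (g p.1, g p.2) = (c, b)))
    (hess : ∃ (k : ℕ) (f : (Fin k → M) → M), f ∈ PolOps Ast k ∧ Essential f) :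
    ∃ f ∈ PolOps Ast 2, DependsOn f 0 ∧ DependsOn f 1 :=
  binary_essential_general B Ast hred hfree hess

end Paper
end

section
/- If B is a homogeneous transitive relational structure such that the set of minimal bounds for the age of B contains no structure of size three, then every Aut(B)-orbit of injective pairs is free. -/
namespace Paper

/-!
Let `a ≠ b` and `c ≠ d`. Glue two copies of the pair `(a, b)` along `a` and put a copy of
`(c, d)` on their two other points. Each two-element substructure of this three-element structure
embeds into `B` (by transitivity, `b`, `c` and `d` have the same one-point type), so, as the age of
`B` has no minimal bound of size three, the whole structure embeds, say as `e₀, e₁, e₂`.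
Homogeneity then moves `(a, b)` to `(e₀, e₁)` and to `(e₀, e₂)`, and `(e₁, e₂)` to `(c, d)`;
the image of `e₀` under the last automorphism is the required common point.
-/

section Structures

variable {M : Type*} {ι : Type} {ar : ι → ℕ} {B : Struct M ι ar}

theorem IsAut.trans {g h : Equiv.Perm M} (hg : IsAut B g) (hh : IsAut B h) :
    IsAut B (g.trans h) :=
  fun i x => (hg i x).trans (hh i fun t => g (x t))

theorem TransitiveStruct.const_iff (htrans : TransitiveStruct B) (i : ι) (x y : M) :
    B i (fun _ => x) ↔ B i (fun _ => y) := by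
  obtain ⟨g, hg, rfl⟩ := htrans x y
  exact hg i fun _ => x

theorem Homogeneous.exists_aut_of_injOn {N : Type*} (hhom : Homogeneous B) (s : Finset N)
    {v w : N → M} (hv : Set.InjOn v s) (hw : Set.InjOn w s)
    (hvw : ∀ (i : ι) (t : Fin (ar i) → N), (∀ p, t p ∈ s) →
      (B i (fun p => v (t p)) ↔ B i (fun p => w (t p)))) :
    ∃ g ∈ AutSet B, ∀ n ∈ s, g (v n) = w n := by
  classical
  rcases isEmpty_or_nonempty N with hN | hN
  · exact ⟨1, fun _ _ => Iff.rfl, fun n => isEmptyElim n⟩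
  set u := Function.invFunOn v (s : Set N)
  have hu_mem : ∀ x ∈ s.image v, u x ∈ s ∧ v (u x) = x := by
    intro x hx
    obtain ⟨n, hn, rfl⟩ := Finset.mem_image.1 hx
    exact ⟨Function.invFunOn_mem ⟨n, hn, rfl⟩, Function.invFunOn_eq ⟨n, hn, rfl⟩⟩
  have hu_left : ∀ n ∈ s, u (v n) = n := fun n hn => hv.leftInvOn_invFunOn hn
  obtain ⟨g, hg, hgw⟩ := hhom (s.image v) (fun x => w (u x))
    (fun x hx y hy hxy => by
      rw [← (hu_mem x hx).2, ← (hu_mem y hy).2, hw (hu_mem x hx).1 (hu_mem y hy).1 hxy])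
    (fun i x hx => by
      have hx' : x = fun p => v (u (x p)) := funext fun p => ((hu_mem _ (hx p)).2).symm
      conv_lhs => rw [hx']
      exact hvw i (fun p => u (x p)) fun p => (hu_mem _ (hx p)).1)
  exact ⟨g, hg, fun n hn => by rw [hgw _ (Finset.mem_image_of_mem v hn), hu_left n hn]⟩

theorem embeds_restrictStruct_of_injOn {N : Type*} {X : Struct N ι ar} {s : Set N} {v : N → M}
    (hv : s.InjOn v)
    (hXv : ∀ (i : ι) (t : Fin (ar i) → N), (∀ p, t p ∈ s) → (X i t ↔ B i fun p => v (t p))) :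
    Embeds (RestrictStruct X s) B :=
  ⟨fun n => v n, fun _ _ h => Subtype.ext (hv (Subtype.prop _) (Subtype.prop _) h),
    fun i x => hXv i (fun p => x p) fun p => (x p).2⟩

end Structures

theorem Fin3.subset_pair_of_ne_univ {s : Finset (Fin 3)} (hs : s ≠ Finset.univ) :
    s ⊆ {1, 2} ∨ s ⊆ {0, 1} ∨ s ⊆ {0, 2} := by
  obtain ⟨m, hm⟩ : ∃ m, m ∉ s := by
    by_contra! h
    exact hs (Finset.eq_univ_iff_forall.2 h)
  fin_cases m <;> [left; (right; right); (right; left)] <;>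
    intro x hx <;> fin_cases x <;> simp_all

theorem Fin3.cons_apply_of_ne_zero {α : Type*} (a b : α) {j : Fin 3} (hj : j ≠ 0) :
    ![a, b, b] j = b := by
  fin_cases j <;> simp_all

section PairAmalgam

variable {M : Type*} {ι : Type} {ar : ι → ℕ} (B : Struct M ι ar) (a b c d : M)

/-- On `{0, 1, 2}`: the pairs `{0, 1}` and `{0, 2}` are copies of `(a, b)`, and `{1, 2}` is a copy
of `(c, d)`. -/
def pairAmalgam : Struct (Fin 3) ι ar :=
  fun i t =>
    if ∃ p, t p = 0 then B i (fun p => ![a, b, b] (t p)) else B i (fun p => ![a, c, d] (t p))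

variable {B a b c d}

theorem pairAmalgam_iff_of_mem_one_two {i : ι} {t : Fin (ar i) → Fin 3}
    (ht : ∀ p, t p ∈ ({1, 2} : Finset (Fin 3))) :
    pairAmalgam B a b c d i t ↔ B i (fun p => ![a, c, d] (t p)) := by
  rw [pairAmalgam, if_neg]
  rintro ⟨p, hp⟩
  simpa [hp] using ht p

theorem pairAmalgam_iff_of_mem_pair (htrans : TransitiveStruct B) {j : Fin 3} (hj : j ≠ 0)
    {i : ι} {t : Fin (ar i) → Fin 3} (ht : ∀ p, t p ∈ ({0, j} : Finset (Fin 3))) :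
    pairAmalgam B a b c d i t ↔ B i (fun p => ![a, b, b] (t p)) := by
  by_cases h0 : ∃ p, t p = 0
  · rw [pairAmalgam, if_pos h0]
  have htj : ∀ p, t p = j := fun p => by
    simpa [not_exists.1 h0 p] using ht p
  rw [pairAmalgam, if_neg h0]
  simp only [htj, Fin3.cons_apply_of_ne_zero a b hj]
  exact htrans.const_iff i _ _

theorem injOn_pairAmalgam_one_two (hcd : c ≠ d) :
    Set.InjOn ![a, c, d] (({1, 2} : Finset (Fin 3)) : Set (Fin 3)) := by
  intro x hx y hy
  fin_cases x <;> fin_cases y <;> simp_all [eq_comm]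

theorem injOn_pairAmalgam_of_mem_pair (hab : a ≠ b) {j : Fin 3} (hj : j ≠ 0) :
    Set.InjOn ![a, b, b] (({0, j} : Finset (Fin 3)) : Set (Fin 3)) := by
  intro x hx y hy
  fin_cases j <;> fin_cases x <;> fin_cases y <;> simp_all [eq_comm]

theorem embeds_pairAmalgam (htrans : TransitiveStruct B) (hnb3 : NoMinBound3 B) (hab : a ≠ b)
    (hcd : c ≠ d) : Embeds (pairAmalgam B a b c d) B := by
  by_contra hX
  refine hnb3 ⟨_, hX, fun s hs => ?_⟩
  have hsub_pair : ∀ j : Fin 3, j ≠ 0 → s ⊆ {0, j} →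
      Embeds (RestrictStruct (pairAmalgam B a b c d) s) B := fun j hj hs =>
    embeds_restrictStruct_of_injOn
      ((injOn_pairAmalgam_of_mem_pair hab hj).mono (Finset.coe_subset.2 hs))
      fun i t ht => pairAmalgam_iff_of_mem_pair htrans hj fun p => hs (ht p)
  rcases Fin3.subset_pair_of_ne_univ hs with hs | hs | hs
  · exact embeds_restrictStruct_of_injOn
      ((injOn_pairAmalgam_one_two hcd).mono (Finset.coe_subset.2 hs))
      fun i t ht => pairAmalgam_iff_of_mem_one_two fun p => hs (ht p)
  · exact hsub_pair 1 (by decide) hs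
  · exact hsub_pair 2 (by decide) hs

end PairAmalgam

/-- in a homogeneous transitive structure without minimal bounds of size 3,
every orbit of injective pairs is free. -/
theorem injective_orbits_free {M : Type*} {ι : Type} {ar : ι → ℕ} (B : Struct M ι ar)
    (hhom : Homogeneous B) (htrans : TransitiveStruct B) (hnb3 : NoMinBound3 B) :
    ∀ a b : M, a ≠ b → ∀ c d : M, ∃ e : M,
      (∃ g ∈ AutSet B, g a = e ∧ g b = c) ∧ (∃ g ∈ AutSet B, g a = e ∧ g b = d) := by
  intro a b hab c d
  by_cases hcd : c = d
  · obtain ⟨g, hg, hgb⟩ := htrans b c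
    exact ⟨g a, ⟨g, hg, rfl, hgb⟩, ⟨g, hg, rfl, hgb.trans hcd⟩⟩
  obtain ⟨e, he_inj, he⟩ := embeds_pairAmalgam htrans hnb3 hab hcd
  obtain ⟨g, hg, hge⟩ := hhom.exists_aut_of_injOn {1, 2} he_inj.injOn
    (injOn_pairAmalgam_one_two hcd) fun i t ht =>
      (he i t).symm.trans (pairAmalgam_iff_of_mem_one_two ht)
  have hside : ∀ j : Fin 3, j ≠ 0 →
      ∃ h ∈ AutSet B, h.trans g a = g (e 0) ∧ h.trans g b = g (e j) := by
    intro j hj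
    obtain ⟨h, hh, hhe⟩ := hhom.exists_aut_of_injOn {0, j} (injOn_pairAmalgam_of_mem_pair hab hj)
      he_inj.injOn fun i t ht => (pairAmalgam_iff_of_mem_pair htrans hj ht).symm.trans (he i t)
    exact ⟨h, hh, by simp [← hhe 0 (by simp)],
      by simp [← hhe j (by simp), Fin3.cons_apply_of_ne_zero a b hj]⟩
  obtain ⟨h₁, hh₁, h₁a, h₁b⟩ := hside 1 (by decide)
  obtain ⟨h₂, hh₂, h₂a, h₂b⟩ := hside 2 (by decide)
  refine ⟨g (e 0), ⟨h₁.trans g, hh₁.trans hg, h₁a, ?_⟩, ⟨h₂.trans g, hh₂.trans hg, h₂a, ?_⟩⟩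
  · simpa [h₁b] using hge 1 (by simp)
  · simpa [h₂b] using hge 2 (by simp)

end Paper
end

section
/- Let D be a topologically closed oligomorphic function clone on a countable set A that is a model-complete core, let S ⊆ A^n and let ~ be an equivalence relation on S with G_D-invariant classes. Call a pair (a,b) of n-tuples troublesome if there is a binary h ∈ D with h(a,b), h(b,a) ∈ S disjoint and h(a,b) ≁ h(b,a). Then: (i) if (a,b) is not troublesome and g ∈ D is binary, then (g(a,b), g(b,a)) is not troublesome; (ii) if a and b lie in the same G_D-orbit, then (a,b) is not troublesome. -/
namespace Paper

/-- `(a, b)` is a troublesome pair. -/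
def Troublesome {A : Type*} {n : ℕ} (Dc : ∀ k : ℕ, Set ((Fin k → A) → A))
    (S : Set (Fin n → A)) (r : (Fin n → A) → (Fin n → A) → Prop)
    (a b : Fin n → A) : Prop :=
  ∃ h ∈ Dc 2, appN h ![a, b] ∈ S ∧ appN h ![b, a] ∈ S ∧
    DisjTup (appN h ![a, b]) (appN h ![b, a]) ∧ ¬ r (appN h ![a, b]) (appN h ![b, a])

/-
For (i), a witness `h` for the pair `(g(a,b), g(b,a))` yields the witness
`x ↦ h(g(x₀,x₁), g(x₁,x₀))` for `(a,b)`. For (ii), write `b = α a` with `α ∈ G_D`. The unary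
maps `x ↦ h(x, αx)` and `x ↦ h(αx, x)` lie in `D`, so, `D` being a model-complete core, they
agree with some `σ, τ ∈ G_D` on the entries of `a`. Then `τσ⁻¹ ∈ G_D` sends `h(a,b)` to
`h(b,a)`, and these lie in the same `~`-class because the classes are `G_D`-invariant.
-/

section Clone

variable {A : Type*} {C : ∀ k : ℕ, Set ((Fin k → A) → A)}

lemma appN_pair {n : ℕ} (f : (Fin 2 → A) → A) (a b : Fin n → A) (j : Fin n) :
    appN f ![a, b] j = f ![a j, b j] := by
  unfold appN; congr 1; funext i; fin_cases i <;> rfl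

lemma appN_comp₂ {k n : ℕ} (h : (Fin 2 → A) → A) (f g : (Fin k → A) → A)
    (xs : Fin k → Fin n → A) :
    appN (fun x => h ![f x, g x]) xs = appN h ![appN f xs, appN g xs] := by
  funext j; rw [appN_pair]; rfl

lemma IsClone.comp₂ (hC : IsClone C) {m : ℕ} {h : (Fin 2 → A) → A} {f g : (Fin m → A) → A}
    (hh : h ∈ C 2) (hf : f ∈ C m) (hg : g ∈ C m) : (fun x => h ![f x, g x]) ∈ C m := by
  convert hC.2 2 m h ![f, g] hh (Fin.forall_fin_two.2 ⟨hf, hg⟩) using 3 with x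
  funext i; fin_cases i <;> rfl

lemma IsClone.swap_mem (hC : IsClone C) {g : (Fin 2 → A) → A} (hg : g ∈ C 2) :
    (fun x => g ![x 1, x 0]) ∈ C 2 :=
  hC.comp₂ hg (hC.1 2 1) (hC.1 2 0)

lemma IsClone.unaryMem_comp₂ (hC : IsClone C) {h : (Fin 2 → A) → A} {u v : A → A}
    (hh : h ∈ C 2) (hu : UnaryMem C u) (hv : UnaryMem C v) :
    UnaryMem C (fun x => h ![u x, v x]) :=
  hC.comp₂ hh hu hv

lemma IsClone.unaryMem_comp (hC : IsClone C) {u v : A → A}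
    (hu : UnaryMem C u) (hv : UnaryMem C v) : UnaryMem C (v ∘ u) :=
  hC.2 1 1 (fun x => v (x 0)) (fun _ x => u (x 0)) hv (fun _ => hu)

lemma IsClone.unaryMem_id (hC : IsClone C) : UnaryMem C id :=
  hC.1 1 0

lemma symm_mem_grpOf {σ : Equiv.Perm A} (hσ : σ ∈ GrpOf C) : σ.symm ∈ GrpOf C :=
  ⟨hσ.2, hσ.1⟩

lemma IsClone.trans_mem_grpOf (hC : IsClone C) {σ τ : Equiv.Perm A}
    (hσ : σ ∈ GrpOf C) (hτ : τ ∈ GrpOf C) : σ.trans τ ∈ GrpOf C :=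
  ⟨hC.unaryMem_comp (v := τ) hσ.1 hτ.1, hC.unaryMem_comp (v := σ.symm) hτ.2 hσ.2⟩

lemma MCCoreClone.exists_permTup_eq (hmc : MCCoreClone C) {u : A → A} (hu : UnaryMem C u)
    {n : ℕ} (a : Fin n → A) : ∃ σ ∈ GrpOf C, permTup σ a = u ∘ a := by
  classical
  obtain ⟨σ, hσ, hσu⟩ := (hmc u).1 hu (Finset.univ.image a)
  exact ⟨σ, hσ, funext fun j => (hσu (a j) (Finset.mem_image_of_mem a (Finset.mem_univ j))).symm⟩

lemma exists_grpOf_permTup_appN_eq (hC : IsClone C) (hmc : MCCoreClone C)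
    {h : (Fin 2 → A) → A} (hh : h ∈ C 2) {α : Equiv.Perm A} (hα : α ∈ GrpOf C)
    {n : ℕ} (a : Fin n → A) :
    ∃ ρ ∈ GrpOf C, permTup ρ (appN h ![a, permTup α a]) = appN h ![permTup α a, a] := by
  obtain ⟨σ, hσ, hσa⟩ := hmc.exists_permTup_eq (hC.unaryMem_comp₂ hh hC.unaryMem_id hα.1) a
  obtain ⟨τ, hτ, hτa⟩ := hmc.exists_permTup_eq (hC.unaryMem_comp₂ hh hα.1 hC.unaryMem_id) a
  refine ⟨σ.symm.trans τ, hC.trans_mem_grpOf (symm_mem_grpOf hσ) hτ, funext fun j => ?_⟩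
  have hσj := congrFun hσa j
  have hτj := congrFun hτa j
  simp only [permTup, Function.comp_apply, id] at hσj hτj
  simp only [permTup, appN_pair, Equiv.trans_apply, ← hσj, Equiv.symm_apply_apply, hτj]

lemma Troublesome.of_appN {n : ℕ} {S : Set (Fin n → A)} {r : (Fin n → A) → (Fin n → A) → Prop}
    (hC : IsClone C) {g : (Fin 2 → A) → A} (hg : g ∈ C 2) {a b : Fin n → A}
    (ht : Troublesome C S r (appN g ![a, b]) (appN g ![b, a])) : Troublesome C S r a b := by
  obtain ⟨h, hh, ht⟩ := ht
  have hswap : ∀ c d : Fin n → A, appN (fun x => g ![x 1, x 0]) ![c, d] = appN g ![d, c] :=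
    fun c d => funext fun j => by simp only [appN_pair]; rfl
  refine ⟨fun x => h ![g x, g ![x 1, x 0]], hC.comp₂ hh hg (hC.swap_mem hg), ?_⟩
  simpa only [appN_comp₂, hswap] using ht

end Clone

theorem troublesome_pairs_general {A : Type*} (n : ℕ)
    (Dc : ∀ k : ℕ, Set ((Fin k → A) → A))
    (hD : IsClone Dc) (hmc : MCCoreClone Dc)
    (S : Set (Fin n → A)) (r : (Fin n → A) → (Fin n → A) → Prop)
    (hr : EqvOn S r) (hclassinv : ClassesInv (GrpOf Dc) S r) :
    (∀ a b : Fin n → A, ∀ g ∈ Dc 2, ¬ Troublesome Dc S r a b →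
      ¬ Troublesome Dc S r (appN g ![a, b]) (appN g ![b, a])) ∧
    (∀ a b : Fin n → A, OrbEq (GrpOf Dc) a b → ¬ Troublesome Dc S r a b) := by
  refine ⟨fun a b g hg hab ht => hab (ht.of_appN hD hg), ?_⟩
  rintro a _ ⟨α, hα, rfl⟩ ⟨h, hh, hS, -, -, hnr⟩
  obtain ⟨ρ, hρ, hmap⟩ := exists_grpOf_permTup_appN_eq hD hmc hh hα a
  have hrel := hclassinv ρ hρ _ hS
  rw [hmap] at hrel
  exact hnr (hr.symm hrel)

/-- (i) non-troublesomeness is preserved by binary operations of `D`;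
(ii) pairs in the same `G_D`-orbit are not troublesome. -/
theorem troublesome_pairs {A : Type*} [Countable A] (n : ℕ)
    (Dc : ∀ k : ℕ, Set ((Fin k → A) → A))
    (hD : IsClone Dc) (hclosed : CloneClosed Dc)
    (holig : Oligo (GrpOf Dc)) (hmc : MCCoreClone Dc)
    (S : Set (Fin n → A)) (r : (Fin n → A) → (Fin n → A) → Prop)
    (hr : EqvOn S r) (hclassinv : ClassesInv (GrpOf Dc) S r) :
    (∀ a b : Fin n → A, ∀ g ∈ Dc 2, ¬ Troublesome Dc S r a b →
      ¬ Troublesome Dc S r (appN g ![a, b]) (appN g ![b, a])) ∧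
    (∀ a b : Fin n → A, OrbEq (GrpOf Dc) a b → ¬ Troublesome Dc S r a b) :=
  troublesome_pairs_general n Dc hD hmc S r hr hclassinv

end Paper
end
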